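/- Let U ⊆ O_K^{*,+} be an admissible subgroup. Then the action of U on (ℝ_{>0})^s given by u·(x₁,…,x_s) = (σ₁(u)x₁,…,σ_s(u)x_s) is properly discontinuous (for any compact subsets A, B ⊆ (ℝ_{>0})^s, only finitely many u ∈ U satisfy u(A) ∩ B ≠ ∅), and the quotient (ℝ_{>0})^s/U is compact. -/

import Mathlib

/-!
Setting: `K` is a number field with exactly `s ≥ 1` real embeddings
`σr 0, …, σr (s-1) : K →+* ℝ` and `2t ≥ 2` complex (non-real) embeddings, of which
`σc 0, …, σc (t-1) : K →+* ℂ` are pairwise non-conjugate representatives.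
-/

noncomputable section
open NumberField

/-- The subgroup `O_K^{*,+}` of totally positive units: units `u` of the ring of integers
with `σᵢ(u) > 0` for every real embedding `σᵢ`, `i = 1, …, s`. -/
def posUnits (K : Type) [Field K] [NumberField K] {s : ℕ}
    (σr : Fin s → (K →+* ℝ)) : Subgroup (𝓞 K)ˣ where
  carrier := {u | ∀ i, 0 < σr i ((u : 𝓞 K) : K)}
  mul_mem' := by
    intro a b ha hb i
    push_cast [map_mul]
    exact mul_pos (ha i) (hb i)
  one_mem' := by intro i; simp
  inv_mem' := by
    intro a ha i
    have h1 : σr i ((↑(a⁻¹ * a) : 𝓞 K) : K) = 1 := by simp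
    have h2 : σr i ((↑(a⁻¹) : 𝓞 K) : K) * σr i ((↑a : 𝓞 K) : K) = 1 := by
      rw [← h1]; push_cast [map_mul]; ring
    nlinarith [ha i, h2]

/-- A subset of `ℝⁿ` is a lattice if it is discrete and its `ℝ`-linear span is all of `ℝⁿ`. -/
def IsLatticeSet {n : ℕ} (S : Set (Fin n → ℝ)) : Prop :=
  DiscreteTopology S ∧ Submodule.span ℝ S = ⊤

/-- The projection of the logarithmic embedding `l` to the first `s` coordinates:
`u ↦ (log |σ₁(u)|, …, log |σ_s(u)|)`. -/
def projLog {K : Type} [Field K] [NumberField K] {s : ℕ}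
    (σr : Fin s → (K →+* ℝ)) (u : (𝓞 K)ˣ) : Fin s → ℝ :=
  fun i => Real.log |σr i ((u : 𝓞 K) : K)|

/-- The logarithmic embedding
`l(u) = (log|σ₁(u)|, …, log|σ_s(u)|, 2 log|σ_{s+1}(u)|, …, 2 log|σ_{s+t}(u)|)`. -/
def logEmb {K : Type} [Field K] [NumberField K] {s t : ℕ}
    (σr : Fin s → (K →+* ℝ)) (σc : Fin t → (K →+* ℂ)) (u : (𝓞 K)ˣ) :
    Fin (s + t) → ℝ :=
  Fin.append (fun i => Real.log |σr i ((u : 𝓞 K) : K)|)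
    (fun j => 2 * Real.log ‖σc j ((u : 𝓞 K) : K)‖)

/-- A subgroup `U ⊆ O_K^{*,+}` is admissible if it is free abelian of rank `s` and the
projection of `l(U)` to the first `s` coordinates is a lattice in `ℝˢ`. -/
def Admissible {K : Type} [Field K] [NumberField K] {s : ℕ}
    (σr : Fin s → (K →+* ℝ)) (U : Subgroup (𝓞 K)ˣ) : Prop :=
  U ≤ posUnits K σr ∧ Nonempty (U ≃* Multiplicative (Fin s → ℤ)) ∧
    IsLatticeSet (projLog σr '' (U : Set (𝓞 K)ˣ))

/-- The affine action of a pair `(u, a) ∈ O_K^{*,+} ⋉ O_K` on `ℂˢ × ℂᵗ`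
(restricting to `ℍˢ × ℂᵗ`): `(u,a)·z = (σᵢ(u) zᵢ + σᵢ(a))ᵢ`. -/
def otAct {K : Type} [Field K] [NumberField K] {s t : ℕ}
    (σr : Fin s → (K →+* ℝ)) (σc : Fin t → (K →+* ℂ))
    (g : (𝓞 K)ˣ × 𝓞 K) (z : (Fin s → ℂ) × (Fin t → ℂ)) :
    (Fin s → ℂ) × (Fin t → ℂ) :=
  (fun i => (σr i ((g.1 : 𝓞 K) : K) : ℂ) * z.1 i + (σr i (g.2 : K) : ℂ),
   fun j => σc j ((g.1 : 𝓞 K) : K) * z.2 j + σc j (g.2 : K))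

/-- The hyperplane `L = {x ∈ ℝᵐ : ∑ xᵢ = 0}` as a submodule of `ℝᵐ`. -/
def sumZero (m : ℕ) : Submodule ℝ (Fin m → ℝ) where
  carrier := {x | ∑ i, x i = 0}
  add_mem' := by intro a b ha hb; simp_all [Finset.sum_add_distrib]
  zero_mem' := by simp
  smul_mem' := by intro c x hx; simp_all [← Finset.mul_sum]

/-!
Taking logarithms coordinatewise turns the action of `U` on `(ℝ_{>0})ˢ` into the translation
action of the lattice `L = projLog(U)` on `ℝˢ`. Translations by a discrete subgroup are properly
discontinuous, and `ℝˢ / L` is compact. The one point needing care is that `projLog` is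
injective on `U`: it is a surjection `U ≅ ℤˢ → L ≅ ℤˢ`, hence a bijection.
-/

open Module

theorem ZLattice.injective_of_surjective {E : Type*} [NormedAddCommGroup E] [NormedSpace ℝ E]
    [FiniteDimensional ℝ E] (L : Submodule ℤ E) [DiscreteTopology L] [IsZLattice ℝ L]
    {ι : Type*} [Fintype ι] (hι : Fintype.card ι = finrank ℝ E) {f : (ι → ℤ) →+ L}
    (hf : Function.Surjective f) : Function.Injective f := by
  have := ZLattice.module_free ℝ L
  have := ZLattice.module_finite ℝ L
  have hrank : finrank ℤ (ι → ℤ) = finrank ℤ L := by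
    rw [finrank_fintype_fun_eq_card, hι, ZLattice.rank ℝ L]
  exact OrzechProperty.injective_of_surjective_of_injective
    (LinearEquiv.ofFinrankEq _ _ hrank).toLinearMap f.toIntLinearMap (LinearEquiv.injective _) hf

section ProjLog

variable {K : Type} [Field K] [NumberField K] {s : ℕ} (σr : Fin s → (K →+* ℝ))

lemma projLog_mul (u v : (𝓞 K)ˣ) : projLog σr (u * v) = projLog σr u + projLog σr v := by
  funext i
  have hne (w : (𝓞 K)ˣ) : |σr i ((w : 𝓞 K) : K)| ≠ 0 :=
    abs_ne_zero.2 ((w.isUnit.map (algebraMap (𝓞 K) K)).map (σr i)).ne_zero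
  simp only [projLog, Pi.add_apply, Units.val_mul, map_mul, abs_mul]
  exact Real.log_mul (hne u) (hne v)

@[simp]
lemma projLog_one : projLog σr (1 : (𝓞 K)ˣ) = 0 := by
  funext i; simp [projLog]

lemma projLog_inv (u : (𝓞 K)ˣ) : projLog σr u⁻¹ = -projLog σr u :=
  eq_neg_of_add_eq_zero_left (by rw [← projLog_mul, inv_mul_cancel, projLog_one])

lemma projLog_apply_of_mem_posUnits {u : (𝓞 K)ˣ} (hu : u ∈ posUnits K σr) (i : Fin s) :
    projLog σr u i = Real.log (σr i ((u : 𝓞 K) : K)) := by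
  rw [projLog, abs_of_pos (hu i)]

lemma exp_projLog_of_mem_posUnits {u : (𝓞 K)ˣ} (hu : u ∈ posUnits K σr) (i : Fin s) :
    Real.exp (projLog σr u i) = σr i ((u : 𝓞 K) : K) := by
  rw [projLog_apply_of_mem_posUnits σr hu, Real.exp_log (hu i)]

def projLogLattice (U : Subgroup (𝓞 K)ˣ) : Submodule ℤ (Fin s → ℝ) :=
  AddSubgroup.toIntSubmodule
    { carrier := projLog σr '' U
      zero_mem' := ⟨1, U.one_mem, projLog_one σr⟩
      add_mem' := by
        rintro _ _ ⟨u, hu, rfl⟩ ⟨v, hv, rfl⟩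
        exact ⟨u * v, U.mul_mem hu hv, projLog_mul σr u v⟩
      neg_mem' := by
        rintro _ ⟨u, hu, rfl⟩
        exact ⟨u⁻¹, U.inv_mem hu, projLog_inv σr u⟩ }

end ProjLog

namespace Admissible

variable {K : Type} [Field K] [NumberField K] {s : ℕ} {σr : Fin s → (K →+* ℝ)}
  {U : Subgroup (𝓞 K)ˣ}

lemma discreteTopology (hU : Admissible σr U) : DiscreteTopology (projLogLattice σr U) :=
  hU.2.2.1

lemma isZLattice (hU : Admissible σr U) [DiscreteTopology (projLogLattice σr U)] :
    IsZLattice ℝ (projLogLattice σr U) :=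
  ⟨hU.2.2.2⟩

lemma injOn_projLog (hU : Admissible σr U) : Set.InjOn (projLog σr) U := by
  obtain ⟨e⟩ := hU.2.1
  have := hU.discreteTopology
  have := hU.isZLattice
  let f : (Fin s → ℤ) →+ projLogLattice σr U := AddMonoidHom.mk'
    (fun n => ⟨projLog σr (e.symm (.ofAdd n)), _, (e.symm _).2, rfl⟩)
    (fun n m => by ext1; simp [projLog_mul])
  have hf : Function.Surjective f := by
    rintro ⟨_, u, hu, rfl⟩
    exact ⟨(e ⟨u, hu⟩).toAdd, by ext1; simp [f]⟩
  intro u hu v hv huv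
  have hfe : f (e ⟨u, hu⟩).toAdd = f (e ⟨v, hv⟩).toAdd := by ext1; simpa [f] using huv
  simpa using ZLattice.injective_of_surjective _ (by simp) hf hfe

open Pointwise in
lemma finite_setOf_smul_inter_nonempty (hU : Admissible σr U) {A B : Set (Fin s → ℝ)}
    (hA : IsCompact A) (hB : IsCompact B) (hApos : A ⊆ {x | ∀ i, 0 < x i})
    (hBpos : B ⊆ {x | ∀ i, 0 < x i}) :
    {u : (𝓞 K)ˣ | u ∈ U ∧
      ((fun (x : Fin s → ℝ) i => σr i ((u : 𝓞 K) : K) * x i) '' A ∩ B).Nonempty}.Finite := by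
  let logs : (Fin s → ℝ) → (Fin s → ℝ) := fun x i => Real.log (x i)
  have hlogs : ContinuousOn logs {x | ∀ i, 0 < x i} :=
    continuousOn_pi.2 fun i => (continuous_apply i).continuousOn.log fun x hx => (hx i).ne'
  have hT : IsCompact (logs '' B - logs '' A) := by
    rw [sub_eq_add_neg]
    exact (hB.image_of_continuousOn (hlogs.mono hBpos)).add
      (hA.image_of_continuousOn (hlogs.mono hApos)).neg
  have hdisc := hU.discreteTopology
  have hfin : ((logs '' B - logs '' A) ∩ projLogLattice σr U).Finite :=
    Metric.finite_isBounded_inter_isClosed (isDiscrete_iff_discreteTopology.2 hdisc)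
      hT.isBounded (AddSubgroup.isClosed_of_discrete (H := (projLogLattice σr U).toAddSubgroup))
  refine Set.Finite.of_finite_image (hfin.subset ?_) (hU.injOn_projLog.mono fun u hu => hu.1)
  -- a witness `u • a = b` gives `projLog u = log b - log a`
  rintro _ ⟨u, ⟨hu, _, ⟨a, ha, rfl⟩, hb⟩, rfl⟩
  refine ⟨⟨_, ⟨_, hb, rfl⟩, _, ⟨a, ha, rfl⟩, funext fun i => ?_⟩, u, hu, rfl⟩
  have hσ := hU.1 hu i
  simp only [logs, Pi.sub_apply, Real.log_mul hσ.ne' (hApos ha i).ne',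
    projLog_apply_of_mem_posUnits σr (hU.1 hu), add_sub_cancel_right]

lemma compactSpace_quot (hU : Admissible σr U) :
    CompactSpace (Quot fun x y : {x : Fin s → ℝ // ∀ i, 0 < x i} =>
      ∃ u ∈ U, ∀ i, σr i ((u : 𝓞 K) : K) * x.val i = y.val i) := by
  have := hU.discreteTopology
  have := hU.isZLattice
  let toOrthant : (Fin s → ℝ) → {x : Fin s → ℝ // ∀ i, 0 < x i} :=
    fun v => ⟨fun i => Real.exp (v i), fun i => Real.exp_pos _⟩
  let q := Quot.mk (fun x y : {x : Fin s → ℝ // ∀ i, 0 < x i} =>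
      ∃ u ∈ U, ∀ i, σr i ((u : 𝓞 K) : K) * x.val i = y.val i)
  have hcont : Continuous (q ∘ toOrthant) :=
    continuous_quot_mk.comp ((continuous_pi fun i => (continuous_apply i).rexp).subtype_mk _)
  have hsurj : Function.Surjective (q ∘ toOrthant) := by
    rintro ⟨x⟩
    exact ⟨fun i => Real.log (x.1 i),
      congrArg q (Subtype.ext (funext fun i => Real.exp_log (x.2 i)))⟩
  have hper : ∀ z w, w ∈ projLogLattice σr U → q (toOrthant (z + w)) = q (toOrthant z) := by
    rintro z _ ⟨u, hu, rfl⟩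
    refine (Quot.sound ⟨u, hu, fun i => ?_⟩).symm
    simp [toOrthant, Real.exp_add, exp_projLog_of_mem_posUnits σr (hU.1 hu), mul_comm]
  exact ⟨hsurj.range_eq ▸ IsZLattice.isCompact_range_of_periodic _ _ hcont hper⟩

end Admissible

theorem posOrthant_action_properlyDiscontinuous_cocompact_general
    (K : Type) [Field K] [NumberField K] (s : ℕ)
    (σr : Fin s → (K →+* ℝ))
    (U : Subgroup (𝓞 K)ˣ) (hU : Admissible σr U) :
    (∀ A B : Set (Fin s → ℝ), IsCompact A → IsCompact B →
      A ⊆ {x | ∀ i, 0 < x i} → B ⊆ {x | ∀ i, 0 < x i} →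
      {u : (𝓞 K)ˣ | u ∈ U ∧
        (((fun x : Fin s → ℝ => fun i => σr i ((u : 𝓞 K) : K) * x i) '' A) ∩ B).Nonempty}.Finite) ∧
    CompactSpace (Quot fun x y : {x : Fin s → ℝ // ∀ i, 0 < x i} =>
      ∃ u ∈ U, ∀ i, σr i ((u : 𝓞 K) : K) * x.val i = y.val i) :=
  ⟨fun _ _ hA hB hApos hBpos => hU.finite_setOf_smul_inter_nonempty hA hB hApos hBpos,
    hU.compactSpace_quot⟩

/-- Let `U ⊆ O_K^{*,+}` be admissible. The action of `U` on
`(ℝ_{>0})ˢ` by `u·x = (σᵢ(u) xᵢ)ᵢ` is properly discontinuous, and the quotient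
`(ℝ_{>0})ˢ/U` is compact. -/
theorem posOrthant_action_properlyDiscontinuous_cocompact
    (K : Type) [Field K] [NumberField K] (s t : ℕ) (hs : 1 ≤ s) (ht : 1 ≤ t)
    (σr : Fin s → (K →+* ℝ)) (hσr : Function.Bijective σr)
    (hcard : Nat.card {φ : K →+* ℂ // ¬ ComplexEmbedding.IsReal φ} = 2 * t)
    (U : Subgroup (𝓞 K)ˣ) (hU : Admissible σr U) :
    (∀ A B : Set (Fin s → ℝ), IsCompact A → IsCompact B →
      A ⊆ {x | ∀ i, 0 < x i} → B ⊆ {x | ∀ i, 0 < x i} →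
      {u : (𝓞 K)ˣ | u ∈ U ∧
        (((fun x : Fin s → ℝ => fun i => σr i ((u : 𝓞 K) : K) * x i) '' A) ∩ B).Nonempty}.Finite) ∧
    CompactSpace (Quot fun x y : {x : Fin s → ℝ // ∀ i, 0 < x i} =>
      ∃ u ∈ U, ∀ i, σr i ((u : 𝓞 K) : K) * x.val i = y.val i) :=
  posOrthant_action_properlyDiscontinuous_cocompact_general K s σr U hU

end
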